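/- arXiv:2406.08654 — 8 statements merged into one kernel-verified Lean document; each statement's English description precedes it below -/
import Mathlib

section
/- For the logistic loss ℓ(z) = log(1 + e^{-z}), for all real x and z with |z − x| < 1, we have 0 ≤ ℓ(z) − ℓ(x) − ℓ'(x)(z − x) ≤ 2ℓ(x)(z − x)². -/
/-!
By Taylor's theorem with Lagrange remainder, the Bregman divergence
`ℓ z - ℓ x - ℓ' x * (z - x)` equals `ℓ'' c * (z - x) ^ 2 / 2` for some `c` between `x` and `z`,
where `ℓ = -log ∘ σ` has `ℓ' = σ - 1` and `ℓ'' = σ (1 - σ) ≥ 0`. Since `c > x - 1`,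
`ℓ'' c ≤ 1 - σ c = 1 / (1 + exp c) ≤ e / (1 + exp x) = e (1 - σ x) ≤ e ℓ x`,
the last step being `log y ≥ 1 - 1 / y`; and `e < 4`.
-/

open Real

noncomputable def logisticLoss (z : ℝ) : ℝ := Real.log (1 + Real.exp (-z))

open Set

theorem exists_sub_sub_deriv_mul_eq_iteratedDeriv_two {f : ℝ → ℝ} (hf : ContDiff ℝ 2 f)
    (x z : ℝ) :
    ∃ c ∈ uIcc x z, f z - f x - deriv f x * (z - x) = iteratedDeriv 2 f c * (z - x) ^ 2 / 2 := by
  rcases eq_or_ne x z with rfl | hxz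
  · exact ⟨x, left_mem_uIcc, by simp⟩
  obtain ⟨c, hc, h⟩ := taylor_mean_remainder_lagrange_iteratedDeriv (n := 1) hxz hf.contDiffOn
  have hd : derivWithin f (uIcc x z) x = deriv f x :=
    (hf.differentiable (by norm_num) x).derivWithin (uniqueDiffOn_uIcc hxz x left_mem_uIcc)
  refine ⟨c, uIoo_subset_uIcc_self hc, ?_⟩
  simp only [taylorWithinEval_succ, taylor_within_zero_eval] at h
  norm_num [hd] at h
  rw [← h]
  ring

lemma logisticLoss_eq_neg_log_sigmoid (x : ℝ) : logisticLoss x = -log (sigmoid x) := by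
  rw [logisticLoss, sigmoid_def, log_inv, neg_neg]

lemma contDiff_logisticLoss : ContDiff ℝ 2 logisticLoss := by
  rw [funext logisticLoss_eq_neg_log_sigmoid]
  exact ((contDiff_sigmoid.of_le le_top).log fun x => (sigmoid_pos x).ne').neg

lemma hasDerivAt_logisticLoss (x : ℝ) : HasDerivAt logisticLoss (sigmoid x - 1) x := by
  rw [funext logisticLoss_eq_neg_log_sigmoid]
  refine ((hasDerivAt_sigmoid x).log (sigmoid_pos x).ne').fun_neg.congr_deriv ?_
  rw [mul_div_cancel_left₀ _ (sigmoid_pos x).ne']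
  ring

lemma deriv_logisticLoss : deriv logisticLoss = fun x => sigmoid x - 1 :=
  funext fun x => (hasDerivAt_logisticLoss x).deriv

lemma iteratedDeriv_two_logisticLoss :
    iteratedDeriv 2 logisticLoss = fun x => sigmoid x * (1 - sigmoid x) := by
  rw [iteratedDeriv_succ, iteratedDeriv_one, deriv_logisticLoss]
  funext x
  exact ((hasDerivAt_sigmoid x).sub_const 1).deriv

lemma sigmoid_mul_one_sub_sigmoid_nonneg (x : ℝ) : 0 ≤ sigmoid x * (1 - sigmoid x) :=
  mul_nonneg (sigmoid_nonneg x) (sub_nonneg.2 (sigmoid_le_one x))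

lemma one_sub_sigmoid_le_logisticLoss (x : ℝ) : 1 - sigmoid x ≤ logisticLoss x := by
  rw [logisticLoss_eq_neg_log_sigmoid, ← log_inv]
  simpa using one_sub_inv_le_log_of_pos (inv_pos.2 (sigmoid_pos x))

lemma one_sub_sigmoid_le_exp_one_mul {x t : ℝ} (h : x ≤ t + 1) :
    1 - sigmoid t ≤ exp 1 * (1 - sigmoid x) := by
  rw [← sigmoid_neg, ← sigmoid_neg, sigmoid_def, sigmoid_def, neg_neg, neg_neg,
    ← div_eq_mul_inv, inv_eq_one_div, div_le_div_iff₀ (by positivity) (by positivity)]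
  have : exp x ≤ exp t * exp 1 := by rw [← exp_add]; exact exp_le_exp.2 h
  nlinarith [add_one_le_exp 1]

lemma sigmoid_mul_one_sub_sigmoid_le_four_mul_logisticLoss {x t : ℝ} (h : x ≤ t + 1) :
    sigmoid t * (1 - sigmoid t) ≤ 4 * logisticLoss x := calc
  sigmoid t * (1 - sigmoid t) ≤ 1 - sigmoid t :=
    mul_le_of_le_one_left (sub_nonneg.2 (sigmoid_le_one t)) (sigmoid_le_one t)
  _ ≤ exp 1 * (1 - sigmoid x) := one_sub_sigmoid_le_exp_one_mul h
  _ ≤ 4 * logisticLoss x := by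
    nlinarith [exp_one_lt_d9, sigmoid_le_one x, one_sub_sigmoid_le_logisticLoss x]

theorem stmt_0 (x z : ℝ) (h : |z - x| < 1) :
    0 ≤ logisticLoss z - logisticLoss x - deriv logisticLoss x * (z - x) ∧
    logisticLoss z - logisticLoss x - deriv logisticLoss x * (z - x)
      ≤ 2 * logisticLoss x * (z - x) ^ 2 := by
  obtain ⟨c, hc, hD⟩ := exists_sub_sub_deriv_mul_eq_iteratedDeriv_two contDiff_logisticLoss x z
  rw [hD, iteratedDeriv_two_logisticLoss]
  have hcx : x ≤ c + 1 := by
    linarith [(abs_lt.1 ((abs_sub_left_of_mem_uIcc hc).trans_lt h)).1]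
  have hcurv := sigmoid_mul_one_sub_sigmoid_le_four_mul_logisticLoss hcx
  have hsq := sq_nonneg (z - x)
  constructor
  · exact div_nonneg (mul_nonneg (sigmoid_mul_one_sub_sigmoid_nonneg c) hsq) zero_le_two
  · nlinarith
end

section
/- The function x ↦ ψ'(x)·x, where ψ(x) = −log log(1 + e^{−x}), is monotonically increasing on (0, ∞). Equivalently, x ↦ x / ((1 + e^x) log(1 + e^{−x})) is increasing on (0, ∞). -/
/-!
Write the function as `x / g x` with `g x = (1 + eˣ) L x`, `L x = log (1 + e⁻ˣ)`. Then
`g' = eˣ L - 1`, and the numerator of the quotient-rule derivative is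
`g - x g' = (1 + eˣ) L + x (1 - eˣ L)`. Both terms are nonnegative for `x > 0`, the second
because `log (1 + t) ≤ t` gives `L ≤ e⁻ˣ`.
-/

open Real

theorem monotoneOn_id_div_of_mul_deriv_le {D : Set ℝ} (hD : Convex ℝ D) {g g' : ℝ → ℝ}
    (hg : ∀ x ∈ D, HasDerivAt g (g' x) x) (hg_pos : ∀ x ∈ D, 0 < g x)
    (hg' : ∀ x ∈ interior D, x * g' x ≤ g x) :
    MonotoneOn (fun x => x / g x) D := by
  have hquot : ∀ x ∈ D, HasDerivAt (fun x => x / g x) ((1 * g x - x * g' x) / g x ^ 2) x :=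
    fun x hx => (hasDerivAt_id x).fun_div (hg x hx) (hg_pos x hx).ne'
  refine monotoneOn_of_hasDerivWithinAt_nonneg hD
    (fun x hx => (hquot x hx).continuousAt.continuousWithinAt)
    (fun x hx => (hquot x (interior_subset hx)).hasDerivWithinAt) fun x hx => ?_
  exact div_nonneg (by linarith [hg' x hx]) (sq_nonneg _)

lemma log_one_add_exp_neg_pos (x : ℝ) : 0 < log (1 + exp (-x)) :=
  log_pos (by linarith [exp_pos (-x)])

lemma exp_mul_log_one_add_exp_neg_le_one (x : ℝ) : exp x * log (1 + exp (-x)) ≤ 1 := by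
  have hlog : log (1 + exp (-x)) ≤ exp (-x) := by
    linarith [log_le_sub_one_of_pos (by positivity : 0 < 1 + exp (-x))]
  calc exp x * log (1 + exp (-x)) ≤ exp x * exp (-x) := by gcongr
    _ = 1 := by rw [← exp_add, add_neg_cancel, exp_zero]

lemma hasDerivAt_one_add_exp_mul_log_one_add_exp_neg (x : ℝ) :
    HasDerivAt (fun x => (1 + exp x) * log (1 + exp (-x)))
      (exp x * log (1 + exp (-x)) - 1) x := by
  have hinner : HasDerivAt (fun x => 1 + exp (-x)) (-exp (-x)) x := by
    simpa using ((hasDerivAt_exp (-x)).comp x (hasDerivAt_neg x)).const_add 1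
  have hprod := ((hasDerivAt_exp x).const_add 1).fun_mul
    (hinner.log (by positivity : 1 + exp (-x) ≠ 0))
  refine hprod.congr_deriv ?_
  have hexp : exp x * exp (-x) = 1 := by rw [← exp_add, add_neg_cancel, exp_zero]
  field_simp
  linear_combination -hexp

theorem stmt_3 :
    MonotoneOn (fun x : ℝ => x / ((1 + Real.exp x) * Real.log (1 + Real.exp (-x))))
      (Set.Ioi (0 : ℝ)) := by
  refine monotoneOn_id_div_of_mul_deriv_le (convex_Ioi 0)
    (fun x _ => hasDerivAt_one_add_exp_mul_log_one_add_exp_neg x)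
    (fun x _ => mul_pos (by positivity) (log_one_add_exp_neg_pos x)) fun x hx => ?_
  rw [interior_Ioi, Set.mem_Ioi] at hx
  have hL := log_one_add_exp_neg_pos x
  nlinarith [mul_le_mul_of_nonneg_left (exp_mul_log_one_add_exp_neg_le_one x) hx.le, exp_pos x]
end

section
/- For ι(x) = −log(e^{e^{−x}} − 1), the inequality ι(x)/ι'(x) ≥ x + log log 2 holds for every real x. -/
/-!
With `u = e^{-x}`, `ι'(x) = u e^u / (e^u - 1)` is the reciprocal of the slope of the secant of
`exp` over `[-u, 0]`. By convexity of `exp` this slope decreases as `u` grows, so `ι'` is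
positive and decreasing and `ι` is concave. Since `ι(-log log 2) = 0`, the tangent line at `x`
gives `0 ≤ ι(x) + ι'(x) (-log log 2 - x)`; divide by `ι'(x)`.
-/

open Real

noncomputable def iotaAux (x : ℝ) : ℝ := -Real.log (Real.exp (Real.exp (-x)) - 1)

open Set

lemma mul_exp_div_exp_sub_one_eq_inv_slope {u : ℝ} (hu : u ≠ 0) :
    u * exp u / (exp u - 1) = (slope exp 0 (-u))⁻¹ := by
  have h : exp u ≠ 1 := by rwa [Ne, exp_eq_one_iff]
  have h₁ : exp u - 1 ≠ 0 := sub_ne_zero.2 h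
  have h₂ : 1 - exp u ≠ 0 := sub_ne_zero.2 h.symm
  rw [slope_def_field, exp_neg, exp_zero, sub_zero, inv_div]
  field_simp
  ring

lemma slope_exp_zero_pos {u : ℝ} (hu : u ≠ 0) : 0 < slope exp 0 u := by
  rw [slope_def_field, exp_zero, sub_zero]
  rcases hu.lt_or_gt with hu | hu
  · exact div_pos_of_neg_of_neg (by simpa using exp_lt_one_iff.2 hu) hu
  · exact div_pos (by simpa using one_lt_exp_iff.2 hu) hu

lemma monotoneOn_mul_exp_div_exp_sub_one :
    MonotoneOn (fun u => u * exp u / (exp u - 1)) (Ioi 0) := by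
  intro a (ha : 0 < a) b (hb : 0 < b) hab
  simp only [mul_exp_div_exp_sub_one_eq_inv_slope ha.ne',
    mul_exp_div_exp_sub_one_eq_inv_slope hb.ne']
  refine inv_anti₀ (slope_exp_zero_pos (neg_ne_zero.2 hb.ne')) ?_
  exact convexOn_exp.slope_mono (mem_univ 0) ⟨mem_univ _, by simpa using hb.ne'⟩
    ⟨mem_univ _, by simpa using ha.ne'⟩ (neg_le_neg hab)

lemma ConcaveOn.le_add_deriv_mul_sub {S : Set ℝ} {f : ℝ → ℝ} {x y : ℝ}
    (hf : ConcaveOn ℝ S f) (hx : x ∈ S) (hy : y ∈ S) (hfd : DifferentiableAt ℝ f x) :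
    f y ≤ f x + deriv f x * (y - x) := by
  rcases lt_trichotomy x y with hxy | rfl | hxy
  · have := hf.slope_le_deriv hx hy hxy hfd
    rw [slope_def_field, div_le_iff₀ (sub_pos.2 hxy)] at this
    linarith
  · simp
  · have := hf.deriv_le_slope hy hx hxy hfd
    rw [slope_def_field, le_div_iff₀ (sub_pos.2 hxy)] at this
    linarith

lemma hasDerivAt_iotaAux (x : ℝ) :
    HasDerivAt iotaAux (exp (-x) * exp (exp (-x)) / (exp (exp (-x)) - 1)) x := by
  have hpos : exp (exp (-x)) - 1 ≠ 0 := by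
    rw [sub_ne_zero, Ne, exp_eq_one_iff]; exact (exp_pos _).ne'
  exact ((((hasDerivAt_neg x).exp).exp.sub_const 1).log hpos).neg.congr_deriv (by ring)

lemma differentiable_iotaAux : Differentiable ℝ iotaAux :=
  fun x => (hasDerivAt_iotaAux x).differentiableAt

lemma deriv_iotaAux_pos (x : ℝ) : 0 < deriv iotaAux x := by
  rw [(hasDerivAt_iotaAux x).deriv, mul_exp_div_exp_sub_one_eq_inv_slope (exp_pos _).ne']
  exact inv_pos.2 (slope_exp_zero_pos (neg_ne_zero.2 (exp_pos _).ne'))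

lemma antitone_deriv_iotaAux : Antitone (deriv iotaAux) := by
  intro x y hxy
  simp only [fun z => (hasDerivAt_iotaAux z).deriv]
  exact monotoneOn_mul_exp_div_exp_sub_one (exp_pos _) (exp_pos _)
    (exp_le_exp.2 (neg_le_neg hxy))

lemma concaveOn_iotaAux : ConcaveOn ℝ univ iotaAux :=
  antitone_deriv_iotaAux.concaveOn_univ_of_deriv differentiable_iotaAux

lemma iotaAux_neg_log_log_two : iotaAux (-log (log 2)) = 0 := by
  rw [iotaAux, neg_neg, exp_log (log_pos one_lt_two), exp_log two_pos]
  norm_num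

theorem stmt_4 (x : ℝ) :
    iotaAux x / deriv iotaAux x ≥ x + Real.log (Real.log 2) := by
  have tangent := concaveOn_iotaAux.le_add_deriv_mul_sub (mem_univ x)
    (mem_univ (-log (log 2))) (differentiable_iotaAux x)
  rw [iotaAux_neg_log_log_two] at tangent
  rw [ge_iff_le, le_div_iff₀ (deriv_iotaAux_pos x)]
  linarith
end

section
/- If the empirical logistic risk L = (1/n) Σ_{i=1}^n log(1 + e^{−q_i}) satisfies L ≤ 1/(2n), where q_min = min_i q_i, then q_min ≤ −log L ≤ log(2n) + q_min. -/
open Real Finset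

/-!
With `m = min_i q_i`, every term of `n L = ∑ i, log (1 + exp (-q i))` is at most `exp (-m)`, since
`log (1 + x) ≤ x`, so `L ≤ exp (-m)`, which is the first inequality. Conversely `n L` is at least the
term of the minimising index, `log (1 + exp (-m))`. The hypothesis `L ≤ 1 / (2n)` forces this term
below `1 / 2`, a range in which `log (1 + x) ≥ x / 2`; hence `exp (-m) ≤ 2 n L`, the second inequality.
-/

lemma Real.log_one_add_le_self {x : ℝ} (hx : 0 ≤ x) : log (1 + x) ≤ x := by
  linarith [log_le_sub_one_of_pos (show 0 < 1 + x by linarith)]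

lemma Real.half_le_log_one_add {x : ℝ} (hx : 0 ≤ x) (hlog : log (1 + x) ≤ 1 / 2) :
    x / 2 ≤ log (1 + x) := by
  have hpade := le_log_one_add_of_nonneg hx
  have hx2 : x ≤ 2 := by
    have := hpade.trans hlog
    rw [div_le_iff₀ (by linarith)] at this
    linarith
  refine le_trans ?_ hpade
  rw [div_le_div_iff₀ (by norm_num) (by linarith)]
  nlinarith

section LogisticRisk

variable {ι : Type*} [Fintype ι] (q : ι → ℝ)

lemma sum_log_one_add_exp_neg_le_card_mul :
    ∑ i, log (1 + exp (-q i)) ≤ Fintype.card ι * exp (-⨅ i, q i) := by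
  calc ∑ i, log (1 + exp (-q i)) ≤ ∑ _i : ι, exp (-⨅ i, q i) := by
        refine sum_le_sum fun i _ => (log_one_add_le_self (exp_pos _).le).trans ?_
        exact exp_le_exp.mpr (neg_le_neg (ciInf_le (Finite.bddBelow_range q) i))
    _ = Fintype.card ι * exp (-⨅ i, q i) := by simp

lemma log_one_add_exp_neg_iInf_le_sum [Nonempty ι] :
    log (1 + exp (-⨅ i, q i)) ≤ ∑ i, log (1 + exp (-q i)) := by
  obtain ⟨i₀, hi₀⟩ := exists_eq_ciInf_of_finite (f := q)
  rw [← hi₀]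
  exact single_le_sum (f := fun i => log (1 + exp (-q i)))
    (fun i _ => (log_pos (by linarith [exp_pos (-q i)])).le) (mem_univ i₀)

end LogisticRisk

theorem stmt_5 (n : ℕ) (hn : 1 ≤ n) (q : Fin n → ℝ) (qmin L : ℝ)
    (hqmin : qmin = ⨅ i, q i)
    (hL : L = (1 / n) * ∑ i, Real.log (1 + Real.exp (-q i)))
    (hsmall : L ≤ 1 / (2 * n)) :
    qmin ≤ -Real.log L ∧ -Real.log L ≤ Real.log (2 * n) + qmin := by
  have : Nonempty (Fin n) := ⟨⟨0, hn⟩⟩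
  have hn0 : (0 : ℝ) < n := by exact_mod_cast hn
  have hnL : n * L = ∑ i, log (1 + exp (-q i)) := by rw [hL]; field_simp
  have hupper : n * L ≤ n * exp (-qmin) := by
    simpa [hnL, hqmin] using sum_log_one_add_exp_neg_le_card_mul q
  have hlower : log (1 + exp (-qmin)) ≤ n * L := hnL ▸ hqmin ▸ log_one_add_exp_neg_iInf_le_sum q
  have hhalf : n * L ≤ 1 / 2 := by
    calc n * L ≤ n * (1 / (2 * n)) := by gcongr
      _ = 1 / 2 := by field_simp
  have hL0 : 0 < L := by
    have := log_pos (by linarith [exp_pos (-qmin)] : 1 < 1 + exp (-qmin))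
    nlinarith
  have hexp : exp (-qmin) ≤ 2 * n * L := by
    linarith [half_le_log_one_add (exp_pos (-qmin)).le (hlower.trans hhalf)]
  have hLexp : L ≤ exp (-qmin) := le_of_mul_le_mul_left hupper hn0
  constructor
  · linarith [(log_le_iff_le_exp hL0).mpr hLexp]
  · have := (le_log_iff_exp_le (by positivity)).mpr hexp
    rw [log_mul (by positivity) hL0.ne'] at this
    linarith
end

section
/- For real numbers q_1, …, q_n with minimum q_min and L = (1/n) Σ_i log(1 + e^{−q_i}), we have q_min ≥ ι(−log L − log n), where ι(x) = −log(e^{e^{−x}} − 1). -/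
open Real Finset

theorem stmt_6 (n : ℕ) (hn : 1 ≤ n) (q : Fin n → ℝ) (qmin L : ℝ)
    (hqmin : qmin = ⨅ i, q i)
    (hL : L = (1 / n) * ∑ i, Real.log (1 + Real.exp (-q i))) :
    qmin ≥ iotaAux (-Real.log L - Real.log n) := by
  have hn0 : (0:ℝ) < n := by exact_mod_cast hn
  set S := ∑ i, Real.log (1 + Real.exp (-q i)) with hS
  have hterm : ∀ i, 0 < Real.log (1 + Real.exp (-q i)) := fun i =>
    Real.log_pos (by linarith [Real.exp_pos (-q i)])
  have hne : (Finset.univ : Finset (Fin n)).Nonempty := by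
    simpa [Finset.univ_nonempty_iff] using Fin.pos_iff_nonempty.mp hn
  have hSpos : 0 < S := Finset.sum_pos (fun i _ => hterm i) hne
  have hLpos : 0 < L := by rw [hL]; positivity
  have hLn : L * n = S := by rw [hL]; field_simp
  have hexp : Real.exp (-(-Real.log L - Real.log n)) = L * n := by
    rw [show -(-Real.log L - Real.log n) = Real.log L + Real.log n by ring,
      Real.exp_add, Real.exp_log hLpos, Real.exp_log hn0]
  have hpos : 0 < Real.exp (L * n) - 1 := by
    have := Real.add_one_lt_exp (show L * n ≠ 0 by positivity)
    linarith
  rw [hqmin, ge_iff_le]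
  haveI : Nonempty (Fin n) := Fin.pos_iff_nonempty.mp hn
  refine le_ciInf fun i => ?_
  rw [show iotaAux (-Real.log L - Real.log n) = -Real.log (Real.exp (Real.exp (-(-Real.log L - Real.log n))) - 1) from rfl, hexp, neg_le, ← Real.log_exp (-q i)]
  rw [Real.log_le_log_iff (Real.exp_pos _) hpos]
  have h1 : Real.log (1 + Real.exp (-q i)) ≤ S :=
    Finset.single_le_sum (fun j _ => (hterm j).le) (Finset.mem_univ i)
  have h2 : 1 + Real.exp (-q i) ≤ Real.exp S := by
    rw [← Real.exp_log (show (0:ℝ) < 1 + Real.exp (-q i) by positivity)]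
    exact Real.exp_le_exp.mpr h1
  rw [hLn]; linarith
end

section
/- Fix constants ρ, β, κ > 0, stepsize η̃ > 0, and n ≥ 1. The function Φ(x) = log(−log(2n e^κ x)) + (1 + (4ρ² + 2β)η̃)/log(2n e^κ x) is convex on the interval (0, 1/(2n e^{2+κ})). -/
/-!
With `L = log (a x)`, `a = 2 n e^κ` and `c = 1 + (4ρ² + 2β)η̃`, the function is `g (L)` for
`g t = log (-t) + c / t`. As `dL/dx = 1/x`, its second derivative in `x` is
`(g'' (L) - g' (L)) / x²`, so convexity reduces to `g' ≤ g''` on the range `L ≤ -2`, where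
`g'' t - g' t = (t² + t - c (t + 2)) / (-t³)` is a quotient of nonnegative numbers.
-/

open Real Set

theorem hasDerivAt_log_const_mul {a x : ℝ} (ha : a ≠ 0) (hx : x ≠ 0) :
    HasDerivAt (fun y => log (a * y)) x⁻¹ x :=
  (((hasDerivAt_id' x).const_mul a).log (mul_ne_zero ha hx)).congr_deriv (by field_simp)

theorem convexOn_comp_log_const_mul {a : ℝ} (ha : a ≠ 0) {D T : Set ℝ} (hD : Convex ℝ D)
    (hD0 : (0 : ℝ) ∉ D) (hDT : ∀ x ∈ D, log (a * x) ∈ T) {g g' g'' : ℝ → ℝ}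
    (hg : ∀ t ∈ T, HasDerivAt g (g' t) t) (hg' : ∀ t ∈ T, HasDerivAt g' (g'' t) t)
    (hle : ∀ t ∈ T, g' t ≤ g'' t) :
    ConvexOn ℝ D (fun x => g (log (a * x))) := by
  have hx0 : ∀ x ∈ D, x ≠ 0 := fun x hx h => hD0 (h ▸ hx)
  have hf : ∀ x ∈ D, HasDerivAt (fun y => g (log (a * y))) (g' (log (a * x)) / x) x :=
    fun x hx => ((hg _ (hDT x hx)).comp x (hasDerivAt_log_const_mul ha (hx0 x hx))).congr_deriv
      (div_eq_mul_inv _ _).symm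
  have hf' : ∀ x ∈ D, HasDerivAt (fun y => g' (log (a * y)) / y)
      ((g'' (log (a * x)) - g' (log (a * x))) / x ^ 2) x := fun x hx =>
    (((hg' _ (hDT x hx)).comp x (hasDerivAt_log_const_mul ha (hx0 x hx))).div
      (hasDerivAt_id' x) (hx0 x hx)).congr_deriv (by field_simp [hx0 x hx]; rfl)
  refine convexOn_of_hasDerivWithinAt2_nonneg hD
    (fun x hx => (hf x hx).continuousAt.continuousWithinAt)
    (fun x hx => (hf x (interior_subset hx)).hasDerivWithinAt)
    (fun x hx => (hf' x (interior_subset hx)).hasDerivWithinAt) fun x hx => ?_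
  exact div_nonneg (sub_nonneg.mpr (hle _ (hDT x (interior_subset hx)))) (sq_nonneg x)

theorem hasDerivAt_log_neg_add_const_div {c t : ℝ} (ht : t ≠ 0) :
    HasDerivAt (fun s => log (-s) + c / s) ((t - c) / t ^ 2) t :=
  (((hasDerivAt_neg t).log (neg_ne_zero.mpr ht)).add
    ((hasDerivAt_const t c).div (hasDerivAt_id' t) ht)).congr_deriv (by field_simp; ring)

theorem hasDerivAt_sub_const_div_sq {c t : ℝ} (ht : t ≠ 0) :
    HasDerivAt (fun s => (s - c) / s ^ 2) ((2 * c - t) / t ^ 3) t :=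
  (((hasDerivAt_id' t).sub_const c).div (hasDerivAt_pow 2 t) (pow_ne_zero 2 ht)).congr_deriv
    (by field_simp; ring)

theorem sub_const_div_sq_le_of_le_neg_two {c t : ℝ} (hc : 0 ≤ c) (ht : t ≤ -2) :
    (t - c) / t ^ 2 ≤ (2 * c - t) / t ^ 3 := by
  have ht0 : t ≠ 0 := by linarith
  calc (t - c) / t ^ 2 = (t - c) * t / t ^ 3 := by field_simp
    _ ≤ (2 * c - t) / t ^ 3 :=
      div_le_div_of_nonpos_of_le (Odd.pow_nonpos (by decide) (by linarith))
        (by nlinarith [mul_nonneg hc (by linarith : 0 ≤ -(t + 2))])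

theorem log_mul_lt_neg_two {b x : ℝ} (hb : 0 < b) (hx : 0 < x) (hxb : x < 1 / (b * exp 2)) :
    log (b * x) < -2 := by
  rw [← exp_lt_exp, exp_log (by positivity), exp_neg, ← one_div]
  rw [lt_div_iff₀ (by positivity)] at hxb ⊢
  linarith

theorem stmt_7_general (n : ℕ) (hn : 1 ≤ n) (ρ β κ η : ℝ) (hβ : 0 < β) (hη : 0 < η) :
    ConvexOn ℝ (Set.Ioo (0 : ℝ) (1 / (2 * n * Real.exp (2 + κ))))
      (fun x : ℝ =>
        Real.log (-Real.log (2 * n * Real.exp κ * x)) +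
          (1 + (4 * ρ ^ 2 + 2 * β) * η) / Real.log (2 * n * Real.exp κ * x)) := by
  have ha : 0 < 2 * n * exp κ := by
    have : (0 : ℝ) < n := by exact_mod_cast hn
    positivity
  have hc : 0 ≤ 1 + (4 * ρ ^ 2 + 2 * β) * η := by positivity
  have hrange : ∀ x ∈ Ioo (0 : ℝ) (1 / (2 * n * exp (2 + κ))),
      log (2 * n * exp κ * x) ∈ Iic (-2) := fun x hx => by
    refine (log_mul_lt_neg_two ha hx.1 ?_).le
    simpa only [exp_add, mul_comm (exp 2), ← mul_assoc] using hx.2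
  have hneg : ∀ t ∈ Iic (-2 : ℝ), t ≠ 0 := fun t (ht : t ≤ -2) => (by linarith : t < 0).ne
  exact convexOn_comp_log_const_mul ha.ne' (convex_Ioo _ _) (fun h => lt_irrefl _ h.1) hrange
    (fun t ht => hasDerivAt_log_neg_add_const_div (hneg t ht))
    (fun t ht => hasDerivAt_sub_const_div_sq (hneg t ht))
    (fun t ht => sub_const_div_sq_le_of_le_neg_two hc ht)

theorem stmt_7 (n : ℕ) (hn : 1 ≤ n) (ρ β κ η : ℝ) (hρ : 0 < ρ) (hβ : 0 < β)
    (hκ : 0 < κ) (hη : 0 < η) :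
    ConvexOn ℝ (Set.Ioo (0 : ℝ) (1 / (2 * n * Real.exp (2 + κ))))
      (fun x : ℝ =>
        Real.log (-Real.log (2 * n * Real.exp κ * x)) +
          (1 + (4 * ρ ^ 2 + 2 * β) * η) / Real.log (2 * n * Real.exp κ * x)) :=
  stmt_7_general n hn ρ β κ η hβ hη
end

section
/- For the logistic loss ℓ(x) = log(1 + e^{−x}) and any c > 0, the inequality ℓ(x + c) ≥ e^{−c} ℓ(x) holds for all real x. -/
open Real

theorem stmt_11 (c : ℝ) (hc : 0 < c) (x : ℝ) :
    Real.log (1 + Real.exp (-(x + c))) ≥ Real.exp (-c) * Real.log (1 + Real.exp (-x)) := by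
  have h1 : (0:ℝ) < 1 + Real.exp (-x) := by positivity
  have hb := rpow_one_add_le_one_add_mul_self (s := Real.exp (-x))
    (by linarith [Real.exp_pos (-x)]) (Real.exp_pos (-c)).le
    (Real.exp_le_one_iff.mpr (by linarith) : Real.exp (-c) ≤ 1)
  have h2 : (1 + Real.exp (-x)) ^ Real.exp (-c) ≤ 1 + Real.exp (-(x + c)) := by
    calc (1 + Real.exp (-x)) ^ Real.exp (-c) ≤ 1 + Real.exp (-c) * Real.exp (-x) := hb
    _ = 1 + Real.exp (-(x + c)) := by rw [← Real.exp_add]; ring_nf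
  have := Real.log_le_log (by positivity) h2
  rwa [Real.log_rpow h1] at this
end

section
/- Let f: ℝ^d → ℝ be continuously differentiable with |f(x) − ⟨∇f(x), x⟩| ≤ κ for all x, and fix r > 0. Then there exist constants C₁, C₂ ≥ 0 such that |f(x)| ≤ C₁‖x‖ for all x with ‖x‖ ≥ r, and |f(x)| ≤ C₁‖x‖ + C₂ for all x. -/
open Real

/-! For `‖x‖ ≥ r` write `x = s • u` with `‖u‖ = r` and `s = ‖x‖ / r ≥ 1`. The function
`τ ↦ τ * f (τ⁻¹ • u)` has derivative `f y - Df(y) y` at `y = τ⁻¹ • u`, so by hypothesis it is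
`κ`-Lipschitz on `(0, ∞)`. Comparing `τ = 1` with `τ = 1 / s` gives
`|f x| ≤ s (|f u| + κ) ≤ ‖x‖ (max_{‖u‖ = r} |f u| + κ) / r`; inside the ball of radius `r`,
`f` is bounded by compactness. -/

section EulerDefect

variable {E : Type*} [NormedAddCommGroup E] [NormedSpace ℝ E] {f : E → ℝ} {κ : ℝ}

theorem hasDerivAt_mul_comp_inv_smul {x : E} {τ : ℝ} (hτ : τ ≠ 0)
    (hf : DifferentiableAt ℝ f (τ⁻¹ • x)) :
    HasDerivAt (fun t : ℝ => t * f (t⁻¹ • x))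
      (f (τ⁻¹ • x) - fderiv ℝ f (τ⁻¹ • x) (τ⁻¹ • x)) τ := by
  have hinv : HasDerivAt (fun t : ℝ => t⁻¹ • x) (-(τ ^ 2)⁻¹ • x) τ :=
    (hasDerivAt_inv hτ).smul_const x
  have hmul : HasDerivAt (fun t : ℝ => t * f (t⁻¹ • x))
      (1 * f (τ⁻¹ • x) + τ * fderiv ℝ f (τ⁻¹ • x) (-(τ ^ 2)⁻¹ • x)) τ :=
    (hasDerivAt_id' τ).mul (hf.hasFDerivAt.comp_hasDerivAt τ hinv)
  convert hmul using 1
  rw [map_smul, map_smul, smul_eq_mul, smul_eq_mul]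
  field_simp
  ring

theorem abs_mul_comp_inv_smul_sub_le (hf : Differentiable ℝ f)
    (hdefect : ∀ y, |f y - fderiv ℝ f y y| ≤ κ) (x : E) {a b : ℝ} (ha : 0 < a) (hb : 0 < b) :
    |b * f (b⁻¹ • x) - a * f (a⁻¹ • x)| ≤ κ * |b - a| :=
  (convex_Ioi 0).norm_image_sub_le_of_norm_hasDerivWithin_le
    (fun _ hτ => (hasDerivAt_mul_comp_inv_smul (ne_of_gt hτ) (hf _)).hasDerivWithinAt)
    (fun _ _ => hdefect _) ha hb

theorem abs_le_mul_norm_of_abs_le_on_sphere {M r : ℝ} (hr : 0 < r) (hf : Differentiable ℝ f)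
    (hdefect : ∀ y, |f y - fderiv ℝ f y y| ≤ κ) (hM : ∀ y, ‖y‖ = r → |f y| ≤ M) {x : E}
    (hx : r ≤ ‖x‖) : |f x| ≤ (M + κ) / r * ‖x‖ := by
  have hκ : 0 ≤ κ := (abs_nonneg _).trans (hdefect 0)
  set s := ‖x‖ / r with hs_def
  have hs : 1 ≤ s := (one_le_div hr).2 hx
  have hu : |f (s⁻¹ • x)| ≤ M := by
    refine hM _ ?_
    rw [norm_smul, norm_inv, Real.norm_of_nonneg (by positivity), hs_def]
    field_simp [(hr.trans_le hx).ne']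
  have hcmp := abs_mul_comp_inv_smul_sub_le hf hdefect x one_pos (one_pos.trans_le hs)
  rw [inv_one, one_smul, one_mul, abs_of_nonneg (sub_nonneg.2 hs)] at hcmp
  calc |f x| ≤ s * |f (s⁻¹ • x)| + κ * (s - 1) := by
        have hsf : |s * f (s⁻¹ • x)| = s * |f (s⁻¹ • x)| := by
          rw [abs_mul, abs_of_nonneg (zero_le_one.trans hs)]
        linarith [abs_sub_abs_le_abs_sub (f x) (s * f (s⁻¹ • x)), abs_sub_comm (f x) (s * f (s⁻¹ • x))]
    _ ≤ s * M + κ * s := by gcongr; linarith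
    _ = (M + κ) / r * ‖x‖ := by rw [hs_def]; ring

end EulerDefect

theorem stmt_14_general (d : ℕ) (f : EuclideanSpace ℝ (Fin d) → ℝ) (κ r : ℝ)
    (hr : 0 < r) (hf : ContDiff ℝ 1 f)
    (hnh : ∀ x, |f x - inner ℝ (gradient f x) x| ≤ κ) :
    ∃ C₁ C₂ : ℝ, 0 ≤ C₁ ∧ 0 ≤ C₂ ∧
      (∀ x, r ≤ ‖x‖ → |f x| ≤ C₁ * ‖x‖) ∧
      (∀ x, |f x| ≤ C₁ * ‖x‖ + C₂) := by
  have hfd : Differentiable ℝ f := hf.differentiable one_ne_zero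
  have hdefect : ∀ y, |f y - fderiv ℝ f y y| ≤ κ := fun y => by
    simpa only [inner_gradient_left] using hnh y
  have hκ : 0 ≤ κ := (abs_nonneg _).trans (hdefect 0)
  obtain ⟨M, hM⟩ := (isCompact_closedBall (0 : EuclideanSpace ℝ (Fin d)) r).exists_bound_of_continuousOn
    hfd.continuous.continuousOn
  replace hM : ∀ y, ‖y‖ ≤ r → |f y| ≤ M := fun y hy => hM y (mem_closedBall_zero_iff.2 hy)
  have hM₀ : 0 ≤ M := (abs_nonneg _).trans (hM 0 (by simpa using hr.le))
  have hfar : ∀ x, r ≤ ‖x‖ → |f x| ≤ (M + κ) / r * ‖x‖ := fun x =>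
    abs_le_mul_norm_of_abs_le_on_sphere hr hfd hdefect (fun y hy => hM y hy.le)
  refine ⟨(M + κ) / r, M, by positivity, hM₀, hfar, fun x => ?_⟩
  rcases le_or_gt r ‖x‖ with hx | hx
  · linarith [hfar x hx]
  · linarith [hM x hx.le, show 0 ≤ (M + κ) / r * ‖x‖ by positivity]

theorem stmt_14 (d : ℕ) (f : EuclideanSpace ℝ (Fin d) → ℝ) (κ r : ℝ)
    (hκ : 0 < κ) (hr : 0 < r) (hf : ContDiff ℝ 1 f)
    (hnh : ∀ x, |f x - inner ℝ (gradient f x) x| ≤ κ) :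
    ∃ C₁ C₂ : ℝ, 0 ≤ C₁ ∧ 0 ≤ C₂ ∧
      (∀ x, r ≤ ‖x‖ → |f x| ≤ C₁ * ‖x‖) ∧
      (∀ x, |f x| ≤ C₁ * ‖x‖ + C₂) :=
  stmt_14_general d f κ r hr hf hnh
end
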